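/- arXiv:1102.5162 — 2 statements merged into one kernel-verified Lean document; each statement's English description precedes it below -/
import Mathlib

section
/- Change of variables planarizing the tobogganic harmonic oscillator: let z ↦ x be defined by i·x = (i·z)², i.e., x = -i z², and suppose ψ is a twice-differentiable solution of -ψ''(x) + x² ψ(x) + (α² - 1/4)/x² · ψ(x) = E ψ(x) along a curve in the x-plane. Then φ(z) := ψ(-i z²)/√z satisfies -φ''(z) + 4z⁶ φ(z) + ((4α² - 1/4)/z²) φ(z) = -4E z² φ(z) on the corresponding curve in the z-plane. -/
/-!
Write `φ(z) = ψ(c z²) z^(-1/2)` with `c = -i`. In `φ''` the two first-derivative terms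
`2c ψ'(cz²) z^(-1/2)` (from differentiating `ψ(cz²)` twice) and `-2c ψ'(cz²) z^(-1/2)` (from the
cross term with `(z^(-1/2))'`) cancel, leaving
`φ'' = z^(-1/2) ((2cz)² ψ''(cz²) + 3/(4z²) ψ(cz²))`.
Substituting the oscillator equation at `x = cz²`, where `x² = -z⁴` and `(2cz)² = -4z²`,
gives the sextic equation; the `3/4` shifts `α² - 1/4` to `4α² - 1/4`.
-/

open Complex Filter Topology

theorem hasDerivAt_deriv_mul {𝕜 : Type*} [NontriviallyNormedField 𝕜] {f g : 𝕜 → 𝕜}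
    {f'' g'' z : 𝕜} (hf : ∀ᶠ w in 𝓝 z, DifferentiableAt 𝕜 f w)
    (hg : ∀ᶠ w in 𝓝 z, DifferentiableAt 𝕜 g w) (hf' : HasDerivAt (deriv f) f'' z)
    (hg' : HasDerivAt (deriv g) g'' z) :
    HasDerivAt (deriv fun w => f w * g w)
      (f'' * g z + 2 * (deriv f z * deriv g z) + f z * g'') z := by
  have hderiv : deriv (fun w => f w * g w) =ᶠ[𝓝 z] fun w => deriv f w * g w + f w * deriv g w :=
    (hf.and hg).mono fun w ⟨hfw, hgw⟩ => deriv_mul hfw hgw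
  refine HasDerivAt.congr_of_eventuallyEq ?_ hderiv
  exact ((hf'.mul hg.self_of_nhds.hasDerivAt).add
    (hf.self_of_nhds.hasDerivAt.mul hg')).congr_deriv (by ring)

theorem hasDerivAt_comp_const_mul_sq {𝕜 : Type*} [NontriviallyNormedField 𝕜] {f : 𝕜 → 𝕜}
    (c z : 𝕜) (hf : DifferentiableAt 𝕜 f (c * z ^ 2)) :
    HasDerivAt (fun w => f (c * w ^ 2)) (2 * c * z * deriv f (c * z ^ 2)) z := by
  have hsq : HasDerivAt (fun w => c * w ^ 2) (c * (2 * z)) z := by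
    simpa using (hasDerivAt_pow 2 z).const_mul c
  exact (hf.hasDerivAt.comp z hsq).congr_deriv (by ring)

theorem hasDerivAt_deriv_comp_const_mul_sq {𝕜 : Type*} [NontriviallyNormedField 𝕜]
    {f : 𝕜 → 𝕜} (c z : 𝕜) (hf : ∀ᶠ w in 𝓝 z, DifferentiableAt 𝕜 f (c * w ^ 2))
    (hf' : DifferentiableAt 𝕜 (deriv f) (c * z ^ 2)) :
    HasDerivAt (deriv fun w => f (c * w ^ 2))
      (2 * c * deriv f (c * z ^ 2) + (2 * c * z) ^ 2 * deriv (deriv f) (c * z ^ 2)) z := by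
  have hderiv : deriv (fun w => f (c * w ^ 2)) =ᶠ[𝓝 z] fun w => 2 * c * w * deriv f (c * w ^ 2) :=
    hf.mono fun w hw => (hasDerivAt_comp_const_mul_sq c w hw).deriv
  refine HasDerivAt.congr_of_eventuallyEq ?_ hderiv
  exact (((hasDerivAt_id z).const_mul (2 * c)).mul
    (hasDerivAt_comp_const_mul_sq c z hf')).congr_deriv (by simp only [id]; ring)

theorem Complex.hasDerivAt_deriv_cpow_const {a z : ℂ} (hz : z ∈ slitPlane) :
    HasDerivAt (deriv fun w => w ^ a) (a * ((a - 1) * z ^ (a - 1 - 1))) z := by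
  have hderiv : deriv (fun w : ℂ => w ^ a) =ᶠ[𝓝 z] fun w => a * w ^ (a - 1) :=
    (isOpen_slitPlane.eventually_mem hz).mono fun w hw =>
      (hasStrictDerivAt_cpow_const hw).hasDerivAt.deriv
  exact ((hasStrictDerivAt_cpow_const hz).hasDerivAt.const_mul a).congr_of_eventuallyEq hderiv

theorem hasDerivAt_deriv_comp_const_mul_sq_mul_cpow {f : ℂ → ℂ} {z : ℂ} (c : ℂ)
    (hz : z ∈ slitPlane) (hf : ∀ᶠ w in 𝓝 z, DifferentiableAt ℂ f (c * w ^ 2))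
    (hf' : DifferentiableAt ℂ (deriv f) (c * z ^ 2)) :
    HasDerivAt (deriv fun w => f (c * w ^ 2) * w ^ (-(1 / 2) : ℂ))
      (z ^ (-(1 / 2) : ℂ) *
        ((2 * c * z) ^ 2 * deriv (deriv f) (c * z ^ 2) + 3 / 4 * f (c * z ^ 2) / z ^ 2)) z := by
  have hz0 : z ≠ 0 := slitPlane_ne_zero hz
  have h := hasDerivAt_deriv_mul
    (hf.mono fun w hw => (hasDerivAt_comp_const_mul_sq c w hw).differentiableAt)
    ((isOpen_slitPlane.eventually_mem hz).mono fun w hw =>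
      (hasStrictDerivAt_cpow_const (c := -(1 / 2)) hw).hasDerivAt.differentiableAt)
    (hasDerivAt_deriv_comp_const_mul_sq c z hf hf') (hasDerivAt_deriv_cpow_const hz)
  rw [(hasDerivAt_comp_const_mul_sq c z hf.self_of_nhds).deriv,
    (hasStrictDerivAt_cpow_const hz).hasDerivAt.deriv] at h
  refine h.congr_deriv ?_
  simp only [cpow_sub _ _ hz0, cpow_one]
  field_simp
  ring

/-- Planarizing change of variables for the tobogganic harmonic oscillator: under
`x = -iz²`, `φ(z) = ψ(-iz²)/√z`, a solution of
`-ψ'' + x²ψ + (α² - 1/4)/x² ψ = Eψ` is transformed into a solution of the sextic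
Sturm–Schrödinger equation `-φ'' + 4z⁶φ + (4α² - 1/4)/z² φ = -4Ez² φ`. -/
theorem stmt13 (α E : ℂ) (ψ : ℂ → ℂ)
    (hψ1 : ∀ x : ℂ, x ≠ 0 → DifferentiableAt ℂ ψ x)
    (hψ2 : ∀ x : ℂ, x ≠ 0 → DifferentiableAt ℂ (deriv ψ) x)
    (hODE : ∀ x : ℂ, x ≠ 0 →
      -deriv (deriv ψ) x + x ^ 2 * ψ x + (α ^ 2 - 1/4) / x ^ 2 * ψ x = E * ψ x)
    (φ : ℂ → ℂ)
    (hφ : ∀ z : ℂ, φ z = ψ (-Complex.I * z ^ 2) / z ^ ((1 : ℂ) / 2)) :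
    ∀ z : ℂ, (0 < z.re ∨ z.im ≠ 0) →
      -deriv (deriv φ) z + 4 * z ^ 6 * φ z + (4 * α ^ 2 - 1/4) / z ^ 2 * φ z =
        -4 * E * z ^ 2 * φ z := by
  intro z hz
  rw [← mem_slitPlane_iff] at hz
  have hz0 : z ≠ 0 := slitPlane_ne_zero hz
  have hx0 : ∀ w : ℂ, w ≠ 0 → -I * w ^ 2 ≠ 0 := fun w hw => by simp [hw]
  have hφ' : φ = fun w => ψ (-I * w ^ 2) * w ^ (-(1 / 2) : ℂ) := by
    funext w; rw [hφ, cpow_neg, div_eq_mul_inv]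
  have hODE' := hODE _ (hx0 z hz0)
  rw [show (-I * z ^ 2) ^ 2 = -z ^ 4 by rw [mul_pow, neg_pow, I_sq]; ring] at hODE'
  rw [hφ', (hasDerivAt_deriv_comp_const_mul_sq_mul_cpow (-I) hz
    ((eventually_ne_nhds hz0).mono fun w hw => hψ1 _ (hx0 w hw)) (hψ2 _ (hx0 z hz0))).deriv,
    show (2 * -I * z) ^ 2 = -4 * z ^ 2 by rw [mul_pow, mul_pow, neg_sq, I_sq]; ring]
  field_simp at hODE' ⊢
  linear_combination (-4 * z ^ (-(1 / 2) : ℂ)) * hODE'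
end

section
/- Frequency identity for the tobogganic harmonic approximation: let L > 0, N ≥ 0 integer, τ > 0 with 2L(L+1) = (2N+1)²(10N+3) τ^{10N+5}, and V_eff(y) = L(L+1)/y² + i(-1)^N (2N+1)² y^{10N+3}. Then V_eff''(-iτ) = 2 ω_N² τ^{10N+1} with ω_N = (2N+1)√((10N+3)(10N+5)/2), and V_eff(-iτ) = -(1/2)(2N+1)²(10N+5) τ^{10N+3}. -/
/-!
`V_eff` is a two-term Laurent polynomial `c y^{-2} + d y^{10N+3}`, so away from `0` its second
derivative is read off termwise. At `y = -iτ` the powers of `-i` reduce by `(-i)^{10} = -1`, and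
the phase `i(-1)^N` of the coupling cancels against them to a real sign. The critical relation
then turns the centrifugal contribution `L(L+1)` into a multiple of `τ^{10N+5}`, after which both
identities are polynomial identities in `N` and `τ`.
-/

open Complex Real

section TwoTermLaurent

variable {𝕜 : Type*} [NontriviallyNormedField 𝕜] (a b : 𝕜) (p q : ℤ) {y : 𝕜}

theorem hasDerivAt_two_term_zpow (hy : y ≠ 0) :
    HasDerivAt (fun z => a * z ^ p + b * z ^ q)
      (a * p * y ^ (p - 1) + b * q * y ^ (q - 1)) y := by
  have hp := (hasDerivAt_zpow p y (.inl hy)).const_mul a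
  have hq := (hasDerivAt_zpow q y (.inl hy)).const_mul b
  rw [mul_assoc, mul_assoc]
  exact hp.add hq

theorem deriv_deriv_two_term_zpow (hy : y ≠ 0) :
    deriv (deriv fun z => a * z ^ p + b * z ^ q) y =
      a * p * (p - 1) * y ^ (p - 2) + b * q * (q - 1) * y ^ (q - 2) := by
  have hderiv : deriv (fun z => a * z ^ p + b * z ^ q) =ᶠ[nhds y]
      fun z => a * p * z ^ (p - 1) + b * q * z ^ (q - 1) := by
    filter_upwards [isOpen_ne.mem_nhds hy] with z hz
    exact (hasDerivAt_two_term_zpow a b p q hz).deriv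
  rw [hderiv.deriv_eq, (hasDerivAt_two_term_zpow (a * p) (b * q) (p - 1) (q - 1) hy).deriv]
  simp only [Int.cast_sub, Int.cast_one, sub_sub, one_add_one_eq_two]

end TwoTermLaurent

theorem neg_I_pow_ten_mul_add (N k : ℕ) : (-I) ^ (10 * N + k) = (-1) ^ N * (-I) ^ k := by
  have h : (-I) ^ 10 = -1 := by norm_num [pow_succ]
  rw [pow_add, pow_mul, h]

theorem I_mul_neg_one_pow_mul_neg_one_pow_mul_I (N : ℕ) : I * (-1) ^ N * ((-1) ^ N * I) = -1 := by
  have hsign : ((-1 : ℂ) ^ N) ^ 2 = 1 := by rw [← pow_mul, pow_mul', neg_one_sq, one_pow]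
  linear_combination ((-1) ^ N) ^ 2 * I_sq - hsign

/-- The paper's `V_eff` is `tobogganPotential (L(L+1)) ((2N+1)²) N`. -/
noncomputable def tobogganPotential (c b : ℂ) (N : ℕ) (y : ℂ) : ℂ :=
  c / y ^ 2 + I * (-1) ^ N * b * y ^ (10 * N + 3)

theorem tobogganPotential_neg_I_mul (c b : ℂ) (N : ℕ) (t : ℂ) :
    tobogganPotential c b N (-I * t) = -c / t ^ 2 - b * t ^ (10 * N + 3) := by
  have hpow : (-I * t) ^ (10 * N + 3) = (-1) ^ N * I * t ^ (10 * N + 3) := by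
    rw [mul_pow, neg_I_pow_ten_mul_add]
    norm_num [pow_succ]
  rw [tobogganPotential, hpow, mul_pow, neg_sq, I_sq, neg_one_mul, div_neg, neg_div]
  linear_combination b * t ^ (10 * N + 3) * I_mul_neg_one_pow_mul_neg_one_pow_mul_I N

theorem deriv_deriv_tobogganPotential_neg_I_mul (c b : ℂ) (N : ℕ) {t : ℂ} (ht : t ≠ 0) :
    deriv (deriv (tobogganPotential c b N)) (-I * t) =
      6 * c / t ^ 4 + (10 * N + 3) * (10 * N + 2) * b * t ^ (10 * N + 1) := by
  have hzpow : tobogganPotential c b N =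
      fun y => c * y ^ (-2 : ℤ) + I * (-1) ^ N * b * y ^ ((10 * N + 3 : ℕ) : ℤ) := by
    ext y
    rw [tobogganPotential, zpow_neg, zpow_natCast, zpow_ofNat, div_eq_mul_inv]
  have hpow4 : (-I * t) ^ (-2 - 2 : ℤ) = (t ^ 4)⁻¹ := by
    rw [show (-2 - 2 : ℤ) = -((4 : ℕ) : ℤ) by norm_num, zpow_neg, zpow_natCast, mul_pow]
    norm_num
  have hpow : (-I * t) ^ ((10 * N + 3 : ℕ) - 2 : ℤ) = (-1) ^ N * -I * t ^ (10 * N + 1) := by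
    rw [show ((10 * N + 3 : ℕ) - 2 : ℤ) = ((10 * N + 1 : ℕ) : ℤ) by push_cast; ring, zpow_natCast,
      mul_pow, neg_I_pow_ten_mul_add, pow_one]
  rw [hzpow, deriv_deriv_two_term_zpow _ _ _ _ (by simp [ht]), hpow4, hpow]
  push_cast
  linear_combination -((10 * N + 3) * (10 * N + 2) * b * t ^ (10 * N + 1)) *
    I_mul_neg_one_pow_mul_neg_one_pow_mul_I N

theorem stmt17_general (L : ℝ) (N : ℕ) (τ : ℝ) (hτ : 0 < τ)
    (hcrit : 2 * L * (L + 1) = (2 * N + 1) ^ 2 * (10 * N + 3) * τ ^ (10 * N + 5))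
    (V : ℂ → ℂ)
    (hV : V = fun y => (L * (L + 1) : ℝ) / y ^ 2 +
      Complex.I * (-1 : ℂ) ^ N * ((2 * N + 1 : ℝ) : ℂ) ^ 2 * y ^ (10 * N + 3))
    (ω : ℝ) (hω : ω = (2 * N + 1) * Real.sqrt ((10 * N + 3) * (10 * N + 5) / 2)) :
    deriv (deriv V) (-Complex.I * τ) = 2 * (ω : ℂ) ^ 2 * (τ : ℂ) ^ (10 * N + 1) ∧
    V (-Complex.I * τ) =
      -(1 / 2 : ℂ) * ((2 * N + 1 : ℝ) : ℂ) ^ 2 * ((10 * N + 5 : ℝ) : ℂ) *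
        (τ : ℂ) ^ (10 * N + 3) := by
  have hV' : V = tobogganPotential (L * (L + 1) : ℝ) (((2 * N + 1 : ℝ) : ℂ) ^ 2) N := hV
  have hτ0 : (τ : ℂ) ≠ 0 := ofReal_ne_zero.mpr hτ.ne'
  have hcrit' : ((L * (L + 1) : ℝ) : ℂ) =
      (2 * N + 1) ^ 2 * (10 * N + 3) / 2 * (τ : ℂ) ^ (10 * N + 5) := by
    have h := congrArg ((↑) : ℝ → ℂ) hcrit
    push_cast at h ⊢
    linear_combination h / 2
  have hω2 : (ω : ℂ) ^ 2 = (2 * N + 1) ^ 2 * ((10 * N + 3) * (10 * N + 5) / 2) := by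
    have h : ω ^ 2 = (2 * N + 1) ^ 2 * ((10 * N + 3) * (10 * N + 5) / 2) := by
      rw [hω, mul_pow, Real.sq_sqrt (by positivity)]
    rw [← ofReal_pow, h]
    push_cast
    ring
  rw [hV', deriv_deriv_tobogganPotential_neg_I_mul _ _ _ hτ0,
    tobogganPotential_neg_I_mul, hcrit', hω2]
  constructor <;>
  · field_simp
    push_cast
    ring

/-- Frequency identity for the tobogganic harmonic approximation: with
`2L(L+1) = (2N+1)²(10N+3)τ^{10N+5}` and
`V_eff(y) = L(L+1)/y² + i(-1)^N(2N+1)² y^{10N+3}`, one has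
`V_eff''(-iτ) = 2ω_N² τ^{10N+1}` with `ω_N = (2N+1)√((10N+3)(10N+5)/2)` and
`V_eff(-iτ) = -(1/2)(2N+1)²(10N+5)τ^{10N+3}`. -/
theorem stmt17 (L : ℝ) (hL : 0 < L) (N : ℕ) (τ : ℝ) (hτ : 0 < τ)
    (hcrit : 2 * L * (L + 1) = (2 * N + 1) ^ 2 * (10 * N + 3) * τ ^ (10 * N + 5))
    (V : ℂ → ℂ)
    (hV : V = fun y => (L * (L + 1) : ℝ) / y ^ 2 +
      Complex.I * (-1 : ℂ) ^ N * ((2 * N + 1 : ℝ) : ℂ) ^ 2 * y ^ (10 * N + 3))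
    (ω : ℝ) (hω : ω = (2 * N + 1) * Real.sqrt ((10 * N + 3) * (10 * N + 5) / 2)) :
    deriv (deriv V) (-Complex.I * τ) = 2 * (ω : ℂ) ^ 2 * (τ : ℂ) ^ (10 * N + 1) ∧
    V (-Complex.I * τ) =
      -(1 / 2 : ℂ) * ((2 * N + 1 : ℝ) : ℂ) ^ 2 * ((10 * N + 5 : ℝ) : ℂ) *
        (τ : ℂ) ^ (10 * N + 3) :=
  stmt17_general L N τ hτ hcrit V hV ω hω
end
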